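/- arXiv:2412.05196 — 6 statements merged into one kernel-verified Lean document; each statement's English description precedes it below -/
import Mathlib

section
/- Let a ≥ 1 and q ≥ 1 be natural numbers. In the infinite perfect binary tree, let 𝒩_q be a finite set of exactly q nodes containing the root n1 such that every non-root node n ∈ 𝒩_q has an ancestor n̄ ∈ 𝒩_q with 1 ≤ d(n) − d(n̄) ≤ a. Let 𝒩_{q,a} = ⋃_{n ∈ 𝒩_q} {m : n ⪯ m and d(m) − d(n) ≤ a}. Then |𝒩_{q,a}| ≥ (q+1)·2^a − 1. (This is the counting fact underlying the paper's lower bound that any search algorithm must visit at least (q+1)·2^{a−1} nodes on average before visiting a solution node placed uniformly at random in 𝒩_{q,a}.) -/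
/-!
Choose two distinct children below every node. This selects, below each node `n`, a layer of
`2 ^ j` descendants at distance exactly `j`. The layers at distance `a` below distinct nodes
of `Nq` are disjoint, since `n` is the `a`-th ancestor of each node of its layer; they lie at
depth at least `a`, so they are also disjoint from the `2 ^ a - 1` nodes of the layers at
distance `j < a` below the root, and all of these are within distance `a` of the root. This
gives `q * 2 ^ a + 2 ^ a - 1` nodes. The set being counted is finite because it has bounded
depth and every node has finitely many children.
-/

/-- A rooted tree: a parent map with a root that every node reaches after finitely
many applications of the parent map. -/
structure ParentTree (N : Type*) where
  root : N
  par : N → N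
  par_root : par root = root
  reaches_root : ∀ n : N, ∃ k : ℕ, par^[k] n = root

namespace ParentTree

variable {N : Type*}

/-- `t.anc n m` means `n` is an ancestor of `m` (possibly `n = m`). -/
def anc (t : ParentTree N) (n m : N) : Prop := ∃ k : ℕ, t.par^[k] m = n

/-- `t.sanc n m` means `n` is a strict ancestor of `m`. -/
def sanc (t : ParentTree N) (n m : N) : Prop := t.anc n m ∧ n ≠ m

/-- The set of children of a node. -/
def children (t : ParentTree N) (n : N) : Set N := {m | m ≠ t.root ∧ t.par m = n}

/-- The depth of a node: the least `k` with `par^[k] n = root`. -/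
noncomputable def depth (t : ParentTree N) (n : N) : ℕ := sInf {k : ℕ | t.par^[k] n = t.root}

/-- The distance from an ancestor `n` to `m`: the least `k` with `par^[k] m = n`. -/
noncomputable def dist (t : ParentTree N) (n m : N) : ℕ := sInf {k : ℕ | t.par^[k] m = n}

end ParentTree

open Finset

namespace ParentTree

variable {N : Type*} (t : ParentTree N)

lemma iterate_depth (n : N) : t.par^[t.depth n] n = t.root :=
  Nat.sInf_mem (t.reaches_root n)

lemma depth_le_of_iterate_eq_root {n : N} {k : ℕ} (h : t.par^[k] n = t.root) :
    t.depth n ≤ k :=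
  Nat.sInf_le h

lemma depth_root : t.depth t.root = 0 :=
  Nat.le_zero.mp (t.depth_le_of_iterate_eq_root rfl)

lemma depth_of_mem_children {n m : N} (hm : m ∈ t.children n) :
    t.depth m = t.depth n + 1 := by
  obtain ⟨hm_root, hpar⟩ := hm
  have hle : t.depth m ≤ t.depth n + 1 := t.depth_le_of_iterate_eq_root <| by
    rw [Function.iterate_succ_apply, hpar, t.iterate_depth]
  have hpos : t.depth m ≠ 0 := fun h => hm_root (by simpa [h] using t.iterate_depth m)
  have hge : t.depth n ≤ t.depth m - 1 := t.depth_le_of_iterate_eq_root <| by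
    rw [← hpar, ← Function.iterate_succ_apply, Nat.succ_eq_add_one,
      Nat.sub_add_cancel (Nat.one_le_iff_ne_zero.mpr hpos), t.iterate_depth]
  omega

lemma finite_preimage_par {n : N} (hfin : (t.children n).Finite) :
    (t.par ⁻¹' {n}).Finite :=
  (hfin.insert t.root).subset fun m hm => by
    by_cases h : m = t.root
    · exact Or.inl h
    · exact Or.inr ⟨h, hm⟩

lemma finite_preimage_iterate_par (hfin : ∀ n, (t.children n).Finite) (j : ℕ) (n : N) :
    (t.par^[j] ⁻¹' {n}).Finite := by
  induction j generalizing n with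
  | zero => simp
  | succ j ih =>
    rw [Function.iterate_succ', Set.preimage_comp]
    exact (t.finite_preimage_par (hfin n)).preimage' fun m _ => ih m

lemma finite_setOf_depth_le (hfin : ∀ n, (t.children n).Finite) (D : ℕ) :
    {m | t.depth m ≤ D}.Finite :=
  ((Set.finite_Iic D).biUnion fun j _ => t.finite_preimage_iterate_par hfin j t.root).subset
    fun m hm => Set.mem_biUnion hm (t.iterate_depth m)

variable [DecidableEq N]

def layer (c : N → Bool → N) : ℕ → N → Finset N
  | 0, n => {n}
  | j + 1, n => layer c j (c n false) ∪ layer c j (c n true)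

variable (c : N → Bool → N)

lemma of_mem_layer (hc : ∀ n b, c n b ∈ t.children n) {j : ℕ} {n m : N}
    (hm : m ∈ layer c j n) : t.par^[j] m = n ∧ t.depth m = t.depth n + j := by
  induction j generalizing n with
  | zero =>
    rw [layer, mem_singleton] at hm
    simp [hm]
  | succ j ih =>
    obtain ⟨b, hb⟩ : ∃ b, m ∈ layer c j (c n b) := by
      rcases mem_union.mp hm with h | h
      exacts [⟨false, h⟩, ⟨true, h⟩]
    obtain ⟨hpar, hdepth⟩ := ih hb
    constructor
    · rw [Function.iterate_succ_apply', hpar, (hc n b).2]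
    · rw [hdepth, t.depth_of_mem_children (hc n b)]
      ring

lemma card_layer (hc : ∀ n b, c n b ∈ t.children n) (hne : ∀ n, c n false ≠ c n true)
    (j : ℕ) (n : N) : (layer c j n).card = 2 ^ j := by
  induction j generalizing n with
  | zero => rfl
  | succ j ih =>
    have hdisj : Disjoint (layer c j (c n false)) (layer c j (c n true)) :=
      disjoint_left.2 fun m h h' =>
        hne n <| (t.of_mem_layer c hc h).1.symm.trans (t.of_mem_layer c hc h').1
    rw [layer, card_union_of_disjoint hdisj, ih, ih, pow_succ, mul_two]

lemma card_biUnion_layer (hc : ∀ n b, c n b ∈ t.children n) (hne : ∀ n, c n false ≠ c n true)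
    (s : Finset N) (j : ℕ) : (s.biUnion (layer c j)).card = s.card * 2 ^ j := by
  rw [card_biUnion, sum_const_nat fun n _ => t.card_layer c hc hne j n]
  intro n _ n' _ hnn'
  exact disjoint_left.2 fun m h h' =>
    hnn' <| (t.of_mem_layer c hc h).1.symm.trans (t.of_mem_layer c hc h').1

lemma card_biUnion_range_layer_add_one (hc : ∀ n b, c n b ∈ t.children n)
    (hne : ∀ n, c n false ≠ c n true) (a : ℕ) (n : N) :
    ((range a).biUnion fun j => layer c j n).card + 1 = 2 ^ a := by
  rw [card_biUnion, sum_congr rfl fun j _ => t.card_layer c hc hne j n,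
    Nat.geomSum_eq le_rfl, Nat.div_one, Nat.sub_add_cancel Nat.one_le_two_pow]
  intro j _ j' _ hjj'
  refine disjoint_left.2 fun m h h' => hjj' ?_
  have := (t.of_mem_layer c hc h).2
  have := (t.of_mem_layer c hc h').2
  omega

lemma card_layers_union (hc : ∀ n b, c n b ∈ t.children n) (hne : ∀ n, c n false ≠ c n true)
    (s : Finset N) (a : ℕ) :
    (s.biUnion (layer c a) ∪ (range a).biUnion fun j => layer c j t.root).card =
      (s.card + 1) * 2 ^ a - 1 := by
  have hdisj : Disjoint (s.biUnion (layer c a)) ((range a).biUnion fun j => layer c j t.root) := by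
    refine disjoint_left.2 fun m h h' => ?_
    obtain ⟨n, -, hn⟩ := mem_biUnion.mp h
    obtain ⟨j, hj, hj'⟩ := mem_biUnion.mp h'
    have := (t.of_mem_layer c hc hn).2
    have := (t.of_mem_layer c hc hj').2
    rw [t.depth_root] at this
    rw [mem_range] at hj
    omega
  have := t.card_biUnion_range_layer_add_one c hc hne a t.root
  rw [card_union_of_disjoint hdisj, t.card_biUnion_layer c hc hne, add_one_mul]
  omega

end ParentTree

theorem stmt0_general {N : Type*} (t : ParentTree N)
    (hbin : ∀ n : N, ∃ x y : N, x ≠ y ∧ t.children n = {x, y})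
    (a q : ℕ)
    (Nq : Finset N) (hcard : Nq.card = q) (hroot : t.root ∈ Nq) :
    (q + 1) * 2 ^ a - 1 ≤
      {m : N | ∃ n ∈ Nq, t.anc n m ∧ t.depth m ≤ t.depth n + a}.ncard := by
  classical
  choose x y hxy hch using hbin
  let c : N → Bool → N := fun n b => cond b (y n) (x n)
  have hc : ∀ n b, c n b ∈ t.children n := by
    intro n b
    cases b <;> simp [c, hch]
  have hfin : {m : N | ∃ n ∈ Nq, t.anc n m ∧ t.depth m ≤ t.depth n + a}.Finite :=
    (t.finite_setOf_depth_le (fun n => hch n ▸ Set.toFinite _) (Nq.sup t.depth + a)).subset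
      fun m ⟨n, hn, _, hm⟩ => hm.trans (Nat.add_le_add_right (le_sup hn) a)
  rw [← hcard, ← t.card_layers_union c hc hxy, ← Set.ncard_coe_finset]
  refine Set.ncard_le_ncard (fun m hm => ?_) hfin
  rcases mem_union.mp hm with hm | hm
  · obtain ⟨n, hn, hmn⟩ := mem_biUnion.mp hm
    obtain ⟨hpar, hdepth⟩ := t.of_mem_layer c hc hmn
    exact ⟨n, hn, ⟨a, hpar⟩, hdepth.le⟩
  · obtain ⟨j, hj, hmj⟩ := mem_biUnion.mp hm
    obtain ⟨hpar, hdepth⟩ := t.of_mem_layer c hc hmj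
    refine ⟨t.root, hroot, ⟨j, hpar⟩, ?_⟩
    have := mem_range.mp hj
    omega

/-- in the infinite perfect binary tree, if `Nq` is a set of `q ≥ 1` clue
nodes containing the root, each non-root clue node having a clue ancestor at relative
depth between 1 and `a`, then the set of nodes at depth at most `a` relative to some clue
node has at least `(q+1)·2^a − 1` elements. -/
theorem stmt0 {N : Type*} (t : ParentTree N)
    (hbin : ∀ n : N, ∃ x y : N, x ≠ y ∧ t.children n = {x, y})
    (a q : ℕ) (ha : 1 ≤ a) (hq : 1 ≤ q)
    (Nq : Finset N) (hcard : Nq.card = q) (hroot : t.root ∈ Nq)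
    (hanc : ∀ n ∈ Nq, n ≠ t.root →
      ∃ n' ∈ Nq, t.anc n' n ∧ t.depth n' < t.depth n ∧ t.depth n ≤ t.depth n' + a) :
    (q + 1) * 2 ^ a - 1 ≤
      {m : N | ∃ n ∈ Nq, t.anc n m ∧ t.depth m ≤ t.depth n + a}.ncard :=
  stmt0_general t hbin a q Nq hcard hroot
end

section
/- Let c : N → [0,∞) be a monotone cost function, i.e., c(n) ≤ c(m) whenever n ⪯ m. Then: (i) if c is self-counting, every BFS enumeration with cost function c satisfies t ≤ c(n_t) for every step t at which a node n_t is visited; and (ii) conversely, if some BFS enumeration with cost function c visits every node of the tree and satisfies t ≤ c(n_t) for every step t, then c is self-counting. -/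
open scoped ENNReal NNReal Classical

/-- A `[0,∞]`-valued cost function is self-counting if for every `θ ≥ 0` the set of nodes
of cost at most `θ` is finite and has at most `θ` elements. -/
def SelfCountingE {α : Type*} (c : α → ℝ≥0∞) : Prop :=
  ∀ θ : ℝ, 0 ≤ θ →
    {n | c n ≤ ENNReal.ofReal θ}.Finite ∧ ({n | c n ≤ ENNReal.ofReal θ}.ncard : ℝ) ≤ θ

/-- A best-first-search enumeration for the cost function `c`: at each step `s ≥ 1` with a
nonempty queue, a queued node of minimal cost is visited, removed from the queue, and its
children are inserted; visited nodes are pairwise distinct. -/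
structure BFS {N : Type*} (t : ParentTree N) (c : N → ℝ≥0∞) where
  visit : ℕ → N
  Q : ℕ → Set N
  Q_one : Q 1 = {t.root}
  visit_mem : ∀ s : ℕ, 1 ≤ s → (Q s).Nonempty → visit s ∈ Q s
  visit_min : ∀ s : ℕ, 1 ≤ s → (Q s).Nonempty → ∀ n ∈ Q s, c (visit s) ≤ c n
  Q_succ : ∀ s : ℕ, 1 ≤ s → (Q s).Nonempty →
    Q (s + 1) = (Q s \ {visit s}) ∪ t.children (visit s)
  Q_succ_empty : ∀ s : ℕ, 1 ≤ s → Q s = ∅ → Q (s + 1) = ∅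
  visit_inj : ∀ s s' : ℕ, 1 ≤ s → 1 ≤ s' → (Q s).Nonempty → (Q s').Nonempty →
    visit s = visit s' → s = s'

/-- for a monotone cost function `c` with values in `[0,∞)`:
(i) if `c` is self-counting then every BFS enumeration with cost function `c` satisfies
`t ≤ c(n_t)` at every step `t` at which a node is visited; and (ii) if some BFS
enumeration with cost function `c` visits every node and satisfies `t ≤ c(n_t)` at every
step, then `c` is self-counting. -/
theorem stmt1 {N : Type*} (t : ParentTree N) (hfin : ∀ n : N, (t.children n).Finite)
    (c : N → ℝ≥0∞) (hfinite : ∀ n : N, c n ≠ ⊤)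
    (hmono : ∀ n m : N, t.anc n m → c n ≤ c m) :
    (SelfCountingE c →
      ∀ b : BFS t c, ∀ s : ℕ, 1 ≤ s → (b.Q s).Nonempty → (s : ℝ≥0∞) ≤ c (b.visit s)) ∧
    ((∃ b : BFS t c,
        (∀ n : N, ∃ s : ℕ, 1 ≤ s ∧ (b.Q s).Nonempty ∧ b.visit s = n) ∧
        (∀ s : ℕ, 1 ≤ s → (b.Q s).Nonempty → (s : ℝ≥0∞) ≤ c (b.visit s))) →
      SelfCountingE c) := by
  constructor
  · intro hsc b s hs hne
    -- Q is nonempty at all earlier times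
    have hQne : ∀ u, 1 ≤ u → u ≤ s → (b.Q u).Nonempty := by
      intro u hu hus
      by_contra hemp
      rw [Set.not_nonempty_iff_eq_empty] at hemp
      have hall : ∀ k, b.Q (u + k) = ∅ := by
        intro k
        induction k with
        | zero => simpa using hemp
        | succ k ih => exact b.Q_succ_empty (u + k) (le_trans hu (Nat.le_add_right _ _)) ih
      obtain ⟨k, hk⟩ := Nat.exists_eq_add_of_le hus
      rw [hk, hall k] at hne
      exact hne.ne_empty rfl
    -- cost of visited nodes is nondecreasing
    have hstep : ∀ u, 1 ≤ u → u + 1 ≤ s → c (b.visit u) ≤ c (b.visit (u + 1)) := by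
      intro u hu hus
      have hQu := hQne u hu (le_trans (Nat.le_succ u) hus)
      have hQu1 := hQne (u + 1) (le_trans hu (Nat.le_succ u)) hus
      have hmem := b.visit_mem (u + 1) (le_trans hu (Nat.le_succ u)) hQu1
      rw [b.Q_succ u hu hQu] at hmem
      rcases hmem with h | h
      · exact b.visit_min u hu hQu _ h.1
      · exact hmono _ _ ⟨1, h.2⟩
    have hmonov' : ∀ u, 1 ≤ u → ∀ k, u + k ≤ s → c (b.visit u) ≤ c (b.visit (u + k)) := by
      intro u hu k
      induction k with
      | zero => intro _; simp
      | succ k ih =>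
        intro h
        rw [show u + (k + 1) = (u + k) + 1 from rfl]
        exact le_trans (ih (by omega)) (hstep (u + k) (by omega) (by omega))
    have hmonov : ∀ u, 1 ≤ u → u ≤ s → c (b.visit u) ≤ c (b.visit s) := by
      intro u hu hus
      obtain ⟨k, hk⟩ := Nat.exists_eq_add_of_le hus
      rw [hk]
      exact hmonov' u hu k (by omega)
    -- the s visited nodes are in the sublevel set of θ = (c (visit s)).toReal
    set θ : ℝ := (c (b.visit s)).toReal with hθ
    have hθ0 : 0 ≤ θ := ENNReal.toReal_nonneg
    have hofθ : ENNReal.ofReal θ = c (b.visit s) := ENNReal.ofReal_toReal (hfinite _)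
    obtain ⟨hfinS, hcard⟩ := hsc θ hθ0
    have hsub : b.visit '' (Set.Icc 1 s) ⊆ {n | c n ≤ ENNReal.ofReal θ} := by
      rintro _ ⟨u, ⟨hu1, hus⟩, rfl⟩
      rw [Set.mem_setOf_eq, hofθ]
      exact hmonov u hu1 hus
    have hinj : Set.InjOn b.visit (Set.Icc 1 s) := by
      intro u hu v hv huv
      exact b.visit_inj u v hu.1 hv.1 (hQne u hu.1 hu.2) (hQne v hv.1 hv.2) huv
    have hcard1 : (b.visit '' (Set.Icc 1 s)).ncard = s := by
      rw [Set.ncard_image_of_injOn hinj, ← Finset.coe_Icc, Set.ncard_coe_finset,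
        Nat.card_Icc]
      omega
    have hle : (s : ℝ) ≤ θ := by
      calc (s : ℝ) = ((b.visit '' (Set.Icc 1 s)).ncard : ℝ) := by rw [hcard1]
        _ ≤ ({n | c n ≤ ENNReal.ofReal θ}.ncard : ℝ) := by
            exact_mod_cast Nat.cast_le.mpr (Set.ncard_le_ncard hsub hfinS)
        _ ≤ θ := hcard
    calc (s : ℝ≥0∞) = ENNReal.ofReal (s : ℝ) := by simp
      _ ≤ ENNReal.ofReal θ := ENNReal.ofReal_le_ofReal hle
      _ = c (b.visit s) := hofθ
  · rintro ⟨b, hsurj, hbound⟩ θ hθ0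
    set S := {n | c n ≤ ENNReal.ofReal θ} with hS
    -- pick visiting time
    choose τ hτ1 hτne hτv using hsurj
    have hτθ : ∀ n ∈ S, τ n ∈ Set.Icc 1 (Nat.floor θ) := by
      intro n hn
      refine ⟨hτ1 n, ?_⟩
      have h1 : ((τ n : ℕ) : ℝ≥0∞) ≤ c n := by
        have := hbound (τ n) (hτ1 n) (hτne n)
        rwa [hτv n] at this
      have h2 : ((τ n : ℕ) : ℝ≥0∞) ≤ ENNReal.ofReal θ := le_trans h1 hn
      have h3 : ((τ n : ℕ) : ℝ) ≤ θ := by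
        rw [show ((τ n : ℕ) : ℝ≥0∞) = ENNReal.ofReal ((τ n : ℕ) : ℝ) by simp] at h2
        exact (ENNReal.ofReal_le_ofReal_iff hθ0).mp h2
      exact Nat.le_floor h3
    have hinj : Set.InjOn τ S := by
      intro u hu v hv huv
      have := hτv u
      rw [huv, hτv v] at this
      exact this.symm
    have hfinIcc : (Set.Icc 1 (Nat.floor θ)).Finite := Set.finite_Icc _ _
    have hfinS : S.Finite := by
      apply Set.Finite.of_finite_image _ hinj
      exact hfinIcc.subset (Set.image_subset_iff.mpr hτθ)
    refine ⟨hfinS, ?_⟩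
    have hcard : S.ncard ≤ Nat.floor θ := by
      calc S.ncard ≤ (Set.Icc 1 (Nat.floor θ)).ncard :=
            Set.ncard_le_ncard_of_injOn τ hτθ hinj hfinIcc
        _ = Nat.floor θ := by
            rw [← Finset.coe_Icc, Set.ncard_coe_finset, Nat.card_Icc]; omega
    calc (S.ncard : ℝ) ≤ (Nat.floor θ : ℝ) := Nat.cast_le.mpr hcard
      _ ≤ θ := Nat.floor_le hθ0
end

section
/- Define the slenderness λ by λ(n1) = 1 and λ(m) = λ(par m)·π(m | par m) + 1 for m ≠ n1. Let N' ⊆ N be a finite subtree rooted in n1, i.e., n1 ∈ N' and par n ∈ N' for every n ∈ N' \ {n1}. Then |N'| = Σ_{n ∈ N'} (1 − Σ_{m ∈ C(n) ∩ N'} π(m | n)) · λ(n). -/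
/-- A policy: conditional probabilities `π(m | par m)` on nodes, summing to at most 1
over the children of any node. -/
structure Policy {N : Type*} (t : ParentTree N) where
  cond : N → ℝ
  cond_nonneg : ∀ m : N, 0 ≤ cond m
  cond_le_one : ∀ m : N, cond m ≤ 1
  sum_le_one : ∀ (n : N) (s : Finset N), ↑s ⊆ t.children n → ∑ m ∈ s, cond m ≤ 1

/-- with the slenderness `λ` defined by `λ(root) = 1` and
`λ(m) = λ(par m)·π(m | par m) + 1` for `m ≠ root`, for every finite subtree `N'` rooted in
the root, `|N'| = Σ_{n ∈ N'} (1 − Σ_{m ∈ C(n) ∩ N'} π(m | n))·λ(n)`. -/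
theorem stmt6 {N : Type*} [DecidableEq N] (t : ParentTree N) (P : Policy t)
    (lam : N → ℝ) (hlam_root : lam t.root = 1)
    (hlam : ∀ m : N, m ≠ t.root → lam m = lam (t.par m) * P.cond m + 1)
    (N' : Finset N) (hroot : t.root ∈ N')
    (hsub : ∀ n ∈ N', n ≠ t.root → t.par n ∈ N') :
    (N'.card : ℝ) =
      ∑ n ∈ N',
        (1 - ∑ m ∈ N'.filter (fun m => m ≠ t.root ∧ t.par m = n), P.cond m) * lam n := by
  have key : ∀ m ∈ N',
      (∑ n ∈ N', if m ≠ t.root ∧ t.par m = n then P.cond m * lam n else 0)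
        = if m = t.root then 0 else lam m - 1 := by
    intro m hm
    by_cases h : m = t.root
    · simp [h]
    · simp only [h, if_false, ne_eq, not_false_eq_true, true_and]
      rw [Finset.sum_ite_eq N' (t.par m) (fun n => P.cond m * lam n)]
      rw [if_pos (hsub m hm h), hlam m h]
      ring
  have h2 : ∑ n ∈ N',
      (∑ m ∈ N'.filter (fun m => m ≠ t.root ∧ t.par m = n), P.cond m) * lam n
      = ∑ m ∈ N', if m = t.root then 0 else lam m - 1 := by
    calc ∑ n ∈ N',
        (∑ m ∈ N'.filter (fun m => m ≠ t.root ∧ t.par m = n), P.cond m) * lam n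
        = ∑ n ∈ N', ∑ m ∈ N', if m ≠ t.root ∧ t.par m = n then P.cond m * lam n else 0 := by
          refine Finset.sum_congr rfl fun n _ => ?_
          rw [Finset.sum_mul, Finset.sum_filter]
      _ = ∑ m ∈ N', ∑ n ∈ N', if m ≠ t.root ∧ t.par m = n then P.cond m * lam n else 0 :=
          Finset.sum_comm
      _ = ∑ m ∈ N', if m = t.root then 0 else lam m - 1 :=
          Finset.sum_congr rfl key
  have h3 : ∑ n ∈ N',
      (1 - ∑ m ∈ N'.filter (fun m => m ≠ t.root ∧ t.par m = n), P.cond m) * lam n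
      = ∑ n ∈ N', (lam n - if n = t.root then 0 else lam n - 1) := by
    rw [Finset.sum_sub_distrib, ← h2, ← Finset.sum_sub_distrib]
    refine Finset.sum_congr rfl fun n _ => ?_
    ring
  rw [h3]
  have h4 : ∀ n ∈ N', (lam n - if n = t.root then 0 else lam n - 1) = 1 := by
    intro n _
    by_cases h : n = t.root
    · simp [h, hlam_root]
    · simp [h]
  rw [Finset.sum_congr rfl h4, Finset.sum_const, nsmul_eq_mul, mul_one]
end

section
/- Let N be a type, let c_1, …, c_K : N → [0,∞] be self-counting cost functions, and let w_1, …, w_K ≥ 0 be weights with Σ_{i=1}^K w_i ≤ 1. Then the compound cost function c(n) = min_{1 ≤ i ≤ K} c_i(n)/w_i, with the convention x/0 = ∞, is self-counting. -/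
open scoped ENNReal NNReal Classical

/-!
A node of compound cost at most `θ` has `c i n ≤ θ * w i` for some `i`, and by self-counting
there are at most `θ * w i` such nodes for each `i`; summing gives at most `θ * ∑ i, w i ≤ θ`.
Measuring sets by `encard` coerced to `ℝ≥0∞` lets `θ` range over `[0, ∞]` and absorbs the
finiteness side conditions.
-/

open Set

theorem selfCountingE_iff_encard_le {α : Type*} {c : α → ℝ≥0∞} :
    SelfCountingE c ↔ ∀ θ : ℝ≥0∞, ({n | c n ≤ θ}.encard : ℝ≥0∞) ≤ θ := by
  refine ⟨fun hc θ => ?_, fun hc θ hθ => ?_⟩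
  · rcases eq_or_ne θ ⊤ with rfl | hθ
    · exact le_top
    obtain ⟨hfin, hcard⟩ := hc θ.toReal ENNReal.toReal_nonneg
    rw [ENNReal.ofReal_toReal hθ] at hfin hcard
    rw [← hfin.cast_ncard_eq, ENat.toENNReal_coe, ← ENNReal.ofReal_natCast]
    exact (ENNReal.ofReal_le_ofReal hcard).trans_eq (ENNReal.ofReal_toReal hθ)
  · have hlt : ({n | c n ≤ ENNReal.ofReal θ}.encard : ℝ≥0∞) < ⊤ :=
      (hc _).trans_lt ENNReal.ofReal_lt_top
    have hfin : {n | c n ≤ ENNReal.ofReal θ}.Finite :=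
      encard_lt_top_iff.mp (ENat.toENNReal_lt_top.mp hlt)
    refine ⟨hfin, ?_⟩
    have := hc (ENNReal.ofReal θ)
    rwa [← hfin.cast_ncard_eq, ENat.toENNReal_coe, ← ENNReal.ofReal_natCast,
      ENNReal.ofReal_le_ofReal_iff hθ] at this

theorem setOf_iInf_div_le_subset_iUnion {ι α : Type*} [Finite ι] (c : ι → α → ℝ≥0∞)
    {w : ι → ℝ≥0∞} (hw : ∀ i, w i ≠ ⊤) {θ : ℝ≥0∞} (hθ : θ ≠ ⊤) :
    {n | ⨅ i, c i n / w i ≤ θ} ⊆ ⋃ i, {n | c i n ≤ θ * w i} := by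
  intro n hn
  have : Nonempty ι :=
    not_isEmpty_iff.mp fun _ => hθ <| top_unique <| by simpa [iInf_of_empty] using hn
  obtain ⟨i, hi⟩ := Finite.exists_min fun i => c i n / w i
  -- for `w i = 0` this holds because `c i n / 0 ≤ θ < ⊤` forces `c i n = 0`
  exact mem_iUnion.mpr
    ⟨i, (ENNReal.div_le_iff_le_mul (.inr hθ) (.inl (hw i))).mp ((le_iInf hi).trans hn)⟩

theorem SelfCountingE.iInf_div {ι α : Type*} [Fintype ι] {c : ι → α → ℝ≥0∞}
    (hc : ∀ i, SelfCountingE (c i)) {w : ι → ℝ≥0∞} (hw : ∑ i, w i ≤ 1) :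
    SelfCountingE fun n => ⨅ i, c i n / w i := by
  simp only [selfCountingE_iff_encard_le] at hc ⊢
  intro θ
  rcases eq_or_ne θ ⊤ with rfl | hθ
  · exact le_top
  have hw_ne_top i : w i ≠ ⊤ :=
    ((Finset.single_le_sum (fun j _ => zero_le) (Finset.mem_univ i)).trans hw).trans_lt
      ENNReal.one_lt_top |>.ne
  calc ({n | ⨅ i, c i n / w i ≤ θ}.encard : ℝ≥0∞)
      ≤ (⋃ i, {n | c i n ≤ θ * w i}).encard :=
        ENat.toENNReal_mono (encard_le_encard (setOf_iInf_div_le_subset_iUnion c hw_ne_top hθ))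
    _ ≤ ((∑ i, {n | c i n ≤ θ * w i}.encard : ℕ∞) : ℝ≥0∞) :=
        ENat.toENNReal_mono (encard_iUnion_le_of_fintype _)
    _ = ∑ i, ({n | c i n ≤ θ * w i}.encard : ℝ≥0∞) := map_sum ENat.toENNRealRingHom _ _
    _ ≤ ∑ i, θ * w i := Finset.sum_le_sum fun i _ => hc i _
    _ = θ * ∑ i, w i := (Finset.mul_sum ..).symm
    _ ≤ θ := mul_le_of_le_one_right' hw

/-- composing self-counting cost functions `c_1, …, c_K` with weights
`w_1, …, w_K ≥ 0` summing to at most 1 via `c(n) = min_i c_i(n)/w_i`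
(with the convention `x/0 = ∞`) yields a self-counting cost function. -/
theorem stmt7 {N : Type*} {K : ℕ} (c : Fin K → N → ℝ≥0∞)
    (hsc : ∀ i : Fin K, SelfCountingE (c i))
    (w : Fin K → ℝ≥0∞) (hw : ∑ i : Fin K, w i ≤ 1) :
    SelfCountingE (fun n => ⨅ i : Fin K, c i n / w i) :=
  SelfCountingE.iInf_div hsc hw
end

section
/- Let c : N → [0,∞] be any (possibly non-monotone) cost function and let (n_t) be a BFS enumeration with cost function c. If n_j ≺ n_t for two visited nodes n_j, n_t (which forces j < t), then max_{j < k ≤ t} c(n_k) = max_{n : n_j ≺ n ⪯ n_t} c(n). -/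
open scoped ENNReal NNReal Classical

section Aux
variable {N : Type*} {t : ParentTree N} {c : N → ℝ≥0∞} (b : BFS t c)

lemma bfs_ne_mono {s s' : ℕ} (hs : 1 ≤ s) (hss : s ≤ s') (h : (b.Q s').Nonempty) :
    (b.Q s).Nonempty := by
  induction s' with
  | zero => omega
  | succ n ih =>
    rcases Nat.lt_or_ge s (n+1) with h1 | h1
    · refine ih (by omega) ?_
      by_contra hne
      rw [Set.not_nonempty_iff_eq_empty] at hne
      rw [b.Q_succ_empty n (by omega) hne] at h
      exact h.ne_empty rfl
    · have : s = n + 1 := by omega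
      rwa [this]

lemma bfs_parent_visited : ∀ s : ℕ, 1 ≤ s → (b.Q s).Nonempty → ∀ m ∈ b.Q s,
    m ≠ t.root → ∃ p, 1 ≤ p ∧ p < s ∧ b.visit p = t.par m := by
  intro s
  induction s with
  | zero => omega
  | succ n ih =>
    intro _ hne m hm hmr
    rcases Nat.lt_or_ge 1 (n+1) with h1 | h1
    · have hn1 : 1 ≤ n := by omega
      have hQn : (b.Q n).Nonempty := bfs_ne_mono b hn1 (by omega) hne
      rw [b.Q_succ n hn1 hQn] at hm
      rcases hm with hm | hm
      · obtain ⟨p, hp1, hp2, hp3⟩ := ih hn1 hQn m hm.1 hmr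
        exact ⟨p, hp1, by omega, hp3⟩
      · exact ⟨n, hn1, by omega, hm.2.symm⟩
    · have : n = 0 := by omega
      subst this
      rw [b.Q_one] at hm
      exact absurd hm hmr

lemma bfs_persist {p s : ℕ} (hp : 1 ≤ p) (hps : p ≤ s) (hne : (b.Q s).Nonempty)
    {m : N} (hm : m ∈ b.Q p) (hnv : ∀ r, p ≤ r → r < s → b.visit r ≠ m) :
    m ∈ b.Q s := by
  induction s with
  | zero => omega
  | succ n ih =>
    rcases Nat.lt_or_ge p (n+1) with h1 | h1
    · have hn1 : 1 ≤ n := by omega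
      have hQn : (b.Q n).Nonempty := bfs_ne_mono b hn1 (by omega) hne
      have hmn : m ∈ b.Q n := ih (by omega) hQn (fun r hr1 hr2 => hnv r hr1 (by omega))
      rw [b.Q_succ n hn1 hQn]
      left
      exact ⟨hmn, fun hcontra => hnv n (by omega) (by omega) (Set.mem_singleton_iff.mp hcontra).symm⟩
    · have : p = n + 1 := by omega
      subst this; exact hm

lemma bfs_anc_visited (d : ℕ) {k' : ℕ} (hk' : 1 ≤ k') (hne : (b.Q k').Nonempty) :
    ∃ p, 1 ≤ p ∧ p ≤ k' ∧ b.visit p = t.par^[d] (b.visit k') := by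
  induction d with
  | zero => exact ⟨k', hk', le_rfl, rfl⟩
  | succ n ih =>
    obtain ⟨p, hp1, hp2, hp3⟩ := ih
    by_cases hr : t.par^[n] (b.visit k') = t.root
    · refine ⟨p, hp1, hp2, ?_⟩
      rw [Function.iterate_succ_apply', hr, t.par_root, ← hr, hp3]
    · have hQp : (b.Q p).Nonempty := bfs_ne_mono b hp1 hp2 hne
      have hmem := b.visit_mem p hp1 hQp
      rw [hp3] at hmem
      obtain ⟨q, hq1, hq2, hq3⟩ := bfs_parent_visited b p hp1 hQp _ hmem hr
      exact ⟨q, hq1, by omega, by rw [hq3, Function.iterate_succ_apply']⟩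

lemma bfs_sanc_earlier : ∀ (d : ℕ) {k' p : ℕ}, 1 ≤ k' → 1 ≤ p →
    (b.Q k').Nonempty → (b.Q p).Nonempty →
    t.par^[d] (b.visit k') = b.visit p → b.visit p ≠ b.visit k' → p < k' := by
  intro d
  induction d with
  | zero =>
    intro k' p _ _ _ _ h hne
    exact absurd h.symm hne
  | succ n ih =>
    intro k' p hk' hp hQk hQp h hne
    by_cases hroot : b.visit k' = t.root
    · rw [hroot, Function.iterate_fixed t.par_root] at h
      exact absurd (h.symm.trans hroot.symm) hne
    · have hmem := b.visit_mem k' hk' hQk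
      obtain ⟨q, hq1, hq2, hq3⟩ := bfs_parent_visited b k' hk' hQk _ hmem hroot
      have hQq : (b.Q q).Nonempty := bfs_ne_mono b hq1 (by omega) hQk
      rw [Function.iterate_succ_apply, ← hq3] at h
      by_cases heq : b.visit p = b.visit q
      · have := b.visit_inj p q hp hq1 hQp hQq heq
        omega
      · have := ih hq1 hp hQq hQp h heq
        omega

end Aux

/-- tree-to-path: for any cost function `c` and BFS enumeration with cost
function `c`, if `n_j ≺ n_T` then the maximum cost of the nodes visited at steps
`j < k ≤ T` equals the maximum cost over the nodes `n` with `n_j ≺ n ⪯ n_T`. -/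
theorem stmt9 {N : Type*} (t : ParentTree N) (hfin : ∀ n : N, (t.children n).Finite)
    (c : N → ℝ≥0∞) (b : BFS t c)
    (j T : ℕ) (hj : 1 ≤ j) (hT : 1 ≤ T)
    (hQj : (b.Q j).Nonempty) (hQT : (b.Q T).Nonempty)
    (hanc : t.sanc (b.visit j) (b.visit T)) :
    (⨆ k ∈ Set.Ioc j T, c (b.visit k)) =
      ⨆ n ∈ {n : N | t.sanc (b.visit j) n ∧ t.anc n (b.visit T)}, c n := by
  classical
  set vj := b.visit j with hvj
  set vT := b.visit T with hvT
  obtain ⟨⟨d0, hd0⟩, hne⟩ := hanc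
  set S : Set ℕ := {k | t.par^[k] vT = vj} with hS
  have hSne : S.Nonempty := ⟨d0, hd0⟩
  set d : ℕ := sInf S with hd
  have hdS : t.par^[d] vT = vj := Nat.sInf_mem hSne
  have hd1 : 1 ≤ d := by
    rcases Nat.eq_zero_or_pos d with h | h
    · rw [h] at hdS; simp at hdS; exact absurd hdS.symm hne
    · exact h
  set a : ℕ → N := fun i => t.par^[d - i] vT with ha
  have ha0 : a 0 = vj := by simp [ha, hdS]
  have had : a d = vT := by simp [ha]
  -- a i ≠ vj for 1 ≤ i ≤ d
  have hanevj : ∀ i, 1 ≤ i → i ≤ d → a i ≠ vj := by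
    intro i hi1 hid hcontra
    have : d - i ∈ S := hcontra
    have := Nat.sInf_le this
    omega
  have hsanc_ai : ∀ i, 1 ≤ i → i ≤ d → t.sanc vj (a i) := by
    intro i hi1 hid
    refine ⟨⟨i, ?_⟩, fun h => hanevj i hi1 hid h.symm⟩
    show t.par^[i] (t.par^[d-i] vT) = vj
    rw [← Function.iterate_add_apply]
    have : i + (d - i) = d := by omega
    rw [this, hdS]
  have hanc_ai : ∀ i, t.anc (a i) vT := fun i => ⟨d - i, rfl⟩
  have haroot : ∀ i, 1 ≤ i → i ≤ d → a i ≠ t.root := by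
    intro i hi1 hid hcontra
    have h2 := (hsanc_ai i hi1 hid).1
    obtain ⟨k, hk⟩ := h2
    rw [hcontra, Function.iterate_fixed t.par_root] at hk
    exact hanevj i hi1 hid (hcontra.trans hk)
  have hpar_a : ∀ i, i < d → t.par (a (i+1)) = a i := by
    intro i hid
    show t.par (t.par^[d - (i+1)] vT) = t.par^[d - i] vT
    have he : d - i = (d - (i+1)) + 1 := by omega
    rw [he, Function.iterate_succ_apply']
  -- visit times
  have htau : ∀ i : ℕ, ∃ p, 1 ≤ p ∧ p ≤ T ∧ b.visit p = a i := by
    intro i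
    exact bfs_anc_visited b (d - i) hT hQT
  set τ : ℕ → ℕ := fun i => (htau i).choose with hτ
  have hτ1 : ∀ i, 1 ≤ τ i := fun i => (htau i).choose_spec.1
  have hτT : ∀ i, τ i ≤ T := fun i => (htau i).choose_spec.2.1
  have hτv : ∀ i, b.visit (τ i) = a i := fun i => (htau i).choose_spec.2.2
  have hQτ : ∀ i, (b.Q (τ i)).Nonempty := fun i => bfs_ne_mono b (hτ1 i) (hτT i) hQT
  have hτ0 : τ 0 = j := by
    apply b.visit_inj _ _ (hτ1 0) hj (hQτ 0) hQj
    rw [hτv 0, ha0]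
  have hτd : τ d = T := by
    apply b.visit_inj _ _ (hτ1 d) hT (hQτ d) hQT
    rw [hτv d, had]
  apply le_antisymm
  · refine iSup₂_le fun k hk => ?_
    obtain ⟨hjk, hkT⟩ := hk
    have hk1 : 1 ≤ k := by omega
    have hQk : (b.Q k).Nonempty := bfs_ne_mono b hk1 hkT hQT
    -- find maximal i ≤ d with τ i < k
    set I : Finset ℕ := (Finset.range (d+1)).filter (fun i => τ i < k) with hI
    have h0I : 0 ∈ I := by
      simp [hI, Finset.mem_filter, hτ0]
      omega
    have hIne : I.Nonempty := ⟨0, h0I⟩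
    set i : ℕ := I.max' hIne with hi
    have hiI : i ∈ I := I.max'_mem hIne
    have hid : i ≤ d ∧ τ i < k := by
      simp only [hI, Finset.mem_filter, Finset.mem_range] at hiI
      omega
    have hilt : i < d := by
      rcases Nat.lt_or_ge i d with h | h
      · exact h
      · exfalso
        have : i = d := by omega
        rw [this] at hid
        omega
    have hnotI : τ (i+1) ≥ k := by
      by_contra hcon
      push_neg at hcon
      have : i + 1 ∈ I := by
        simp [hI, Finset.mem_filter]
        omega
      have := I.le_max' _ this
      omega
    -- a (i+1) enters queue at τ i + 1 and persists to k
    have hchild : a (i+1) ∈ t.children (b.visit (τ i)) := by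
      rw [hτv i]
      exact ⟨haroot (i+1) (by omega) (by omega), hpar_a i hilt⟩
    have hmemQ : a (i+1) ∈ b.Q (τ i + 1) := by
      rw [b.Q_succ (τ i) (hτ1 i) (hQτ i)]
      right
      exact hchild
    have hmemQk : a (i+1) ∈ b.Q k := by
      refine bfs_persist b (by have := hτ1 i; omega) (by omega) hQk hmemQ ?_
      intro r hr1 hr2 hcontra
      have hQr : (b.Q r).Nonempty := bfs_ne_mono b (by have := hτ1 i; omega) (by omega) hQk
      have : r = τ (i+1) := by
        apply b.visit_inj _ _ (by have := hτ1 i; omega) (hτ1 (i+1)) hQr (hQτ (i+1))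
        rw [hcontra, hτv]
      omega
    have hle : c (b.visit k) ≤ c (a (i+1)) := b.visit_min k hk1 hQk _ hmemQk
    refine hle.trans ?_
    exact le_iSup₂ (f := fun n (_ : n ∈ {n : N | t.sanc vj n ∧ t.anc n vT}) => c n)
      (a (i+1)) ⟨hsanc_ai (i+1) (by omega) (by omega), hanc_ai (i+1)⟩
  · refine iSup₂_le fun n hn => ?_
    obtain ⟨hs, hancn⟩ := hn
    obtain ⟨e, he⟩ := hancn
    obtain ⟨p, hp1, hpT, hpv⟩ := bfs_anc_visited b e hT hQT
    rw [he] at hpv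
    have hQp : (b.Q p).Nonempty := bfs_ne_mono b hp1 hpT hQT
    obtain ⟨f, hf⟩ := hs.1
    have hjp : j < p := by
      refine bfs_sanc_earlier b f hp1 hj hQp hQj ?_ ?_
      · rw [hpv]; exact hf
      · rw [hpv]
        exact fun h => hs.2 h
    calc c n = c (b.visit p) := by rw [hpv]
      _ ≤ ⨆ k ∈ Set.Ioc j T, c (b.visit k) :=
        le_iSup₂ (f := fun k (_ : k ∈ Set.Ioc j T) => c (b.visit k)) p ⟨hjp, hpT⟩
end

section
/- Let ω_t > 0 for t ≥ 1 be input rerooting weights, set Ω_{≤t} = Σ_{k≤t} ω_k and Ω_{<t} = Σ_{k<t} ω_k, and define the rerooting weights w_t = ω_t/Ω_{≤t} (so w_1 = 1). Consider a √LTS run with these weights and suppose node n_T is visited at step T. Then for every subtask decomposition T_1 < T_2 < … < T_m of n_T: T ≤ (1 + ln(Ω_{<T}/ω_1)) · max_{1 ≤ i < m} (Ω_{≤T_i}/ω_{T_i}) · Λ(n_{T_{i+1}} | n_{T_i}). -/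
/-!
Every ancestor `a ≠ root` of `n_T` lies on a segment `n_{T_i} ≺ a ⪯ n_{T_{i+1}}`
of the decomposition, so by monotonicity of `Λ` its cost is at most
`C = max_i (Λ(n_{T_{i+1}} | n_{T_i}) - 1) / w_{T_i}`. The queue always holds an ancestor of `n_T`,
so best-first search only visits nodes of cost at most `C` up to step `T`, and each visited node
`n_u` has a rerooting step `s < u` with `Λ(n_u | n_s) ≤ 1 + w_s C`. A node has at most `B`
descendants of slenderness at most `B`, hence step `s` is charged at most `w_s C` times and
`T - 1 ≤ C Σ_{s<T} w_s`. Comparing `ω_s / Ω_{≤s}` with `ln Ω_{≤s} - ln Ω_{<s}` bounds the sum by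
`1 + ln (Ω_{<T} / ω_1)`, and `C + 1 ≤ max_i (Ω_{≤T_i} / ω_{T_i}) Λ(n_{T_{i+1}} | n_{T_i})`.
-/

open scoped ENNReal NNReal Classical

namespace Policy

variable {N : Type*} {t : ParentTree N}

/-- The relative path probability `π(n | na)` as an extended nonnegative real:
the product of the conditional probabilities along the path from `na` (excluded) to `n`. -/
noncomputable def relProbE (P : Policy t) (na n : N) : ℝ≥0∞ :=
  ∏ j ∈ Finset.range (t.dist na n), ENNReal.ofReal (P.cond (t.par^[j] n))

/-- The rooted slenderness cost `Λ(n | na) = Σ_{na ⪯ n̄ ⪯ n} 1/π(n̄ | na)`, set to `∞`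
when `na` is not an ancestor of `n`. -/
noncomputable def rootSlend (P : Policy t) (na n : N) : ℝ≥0∞ :=
  if t.anc na n then
    ∑ k ∈ Finset.range (t.dist na n + 1), (P.relProbE na (t.par^[k] n))⁻¹
  else ⊤

end Policy

/-- The √LTS cost function `c^r` determined by a run (`visit`, `Q`) and rerooting weights
`w`: `c^r(root) = 1` and, for `n ≠ root`, `c^r(n)` is the infimum over all steps `s ≥ 1` at
which a node is visited with `visit s ≺ n` of `(Λ(n | visit s) − 1)/w s`
(with the convention `x/0 = ∞`). -/
noncomputable def runCost {N : Type*} (t : ParentTree N) (P : Policy t)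
    (visit : ℕ → N) (Q : ℕ → Set N) (w : ℕ → ℝ≥0) (n : N) : ℝ≥0∞ :=
  if n = t.root then 1
  else ⨅ s ∈ {s : ℕ | 1 ≤ s ∧ (Q s).Nonempty ∧ t.sanc (visit s) n},
    (P.rootSlend (visit s) n - 1) / (w s : ℝ≥0∞)

/-- A √LTS run: a best-first-search enumeration whose cost function is the `runCost`
defined from the run itself and the rerooting weights `w`. -/
def IsRootLTS {N : Type*} (t : ParentTree N) (P : Policy t)
    (visit : ℕ → N) (Q : ℕ → Set N) (w : ℕ → ℝ≥0) : Prop :=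
  Q 1 = {t.root} ∧
  (∀ s : ℕ, 1 ≤ s → (Q s).Nonempty →
      visit s ∈ Q s ∧
      (∀ n ∈ Q s, runCost t P visit Q w (visit s) ≤ runCost t P visit Q w n) ∧
      Q (s + 1) = (Q s \ {visit s}) ∪ t.children (visit s)) ∧
  (∀ s : ℕ, 1 ≤ s → Q s = ∅ → Q (s + 1) = ∅) ∧
  (∀ s s' : ℕ, 1 ≤ s → 1 ≤ s' → (Q s).Nonempty → (Q s').Nonempty →
      visit s = visit s' → s = s')

namespace ParentTree

variable {N : Type*} (t : ParentTree N)

lemma anc_refl (n : N) : t.anc n n := ⟨0, rfl⟩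

lemma anc_trans {a b c : N} (hab : t.anc a b) (hbc : t.anc b c) : t.anc a c := by
  obtain ⟨k, rfl⟩ := hab
  obtain ⟨l, rfl⟩ := hbc
  exact ⟨k + l, Function.iterate_add_apply _ _ _ _⟩

lemma iterate_sub_iterate {k d : ℕ} (h : k ≤ d) (n : N) :
    t.par^[d - k] (t.par^[k] n) = t.par^[d] n := by
  rw [← Function.iterate_add_apply, Nat.sub_add_cancel h]

lemma anc_root (n : N) : t.anc t.root n := t.reaches_root n

lemma iterate_par_root (k : ℕ) : t.par^[k] t.root = t.root :=
  Function.iterate_fixed t.par_root k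

lemma eq_root_of_anc_root {a : N} (h : t.anc a t.root) : a = t.root := by
  obtain ⟨k, rfl⟩ := h
  exact t.iterate_par_root k

lemma eq_root_of_isPeriodicPt {a : N} {c : ℕ} (hc : 0 < c)
    (h : Function.IsPeriodicPt t.par c a) : a = t.root := by
  obtain ⟨d, hd⟩ := t.reaches_root a
  calc a = t.par^[c * d] a := (h.mul_const d).eq.symm
    _ = t.par^[c * d - d] (t.par^[d] a) :=
      (t.iterate_sub_iterate (Nat.le_mul_of_pos_left d hc) a).symm
    _ = t.root := by rw [hd, iterate_par_root]

lemma anc_antisymm {a b : N} (hab : t.anc a b) (hba : t.anc b a) : a = b := by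
  obtain ⟨k, rfl⟩ := hab
  obtain ⟨l, hl⟩ := hba
  have hb : Function.IsPeriodicPt t.par (l + k) b := by
    rwa [Function.IsPeriodicPt, Function.IsFixedPt, Function.iterate_add_apply]
  rcases Nat.eq_zero_or_pos (l + k) with h | h
  · rw [show k = 0 by omega]
    rfl
  · rw [t.eq_root_of_isPeriodicPt h hb, iterate_par_root]

lemma anc_total {a b n : N} (ha : t.anc a n) (hb : t.anc b n) : t.anc a b ∨ t.anc b a := by
  obtain ⟨k, rfl⟩ := ha
  obtain ⟨l, rfl⟩ := hb
  rcases le_total k l with h | h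
  exacts [.inr ⟨l - k, t.iterate_sub_iterate h _⟩, .inl ⟨k - l, t.iterate_sub_iterate h _⟩]

lemma anc_par_of_sanc {b n : N} (h : t.sanc b n) : t.anc b (t.par n) := by
  obtain ⟨⟨k, hk⟩, hne⟩ := h
  cases k with
  | zero => exact absurd hk.symm hne
  | succ k => exact ⟨k, by rwa [← Function.iterate_succ_apply]⟩

lemma dist_spec {a n : N} (h : t.anc a n) : t.par^[t.dist a n] n = a := Nat.sInf_mem h

lemma dist_le {a n : N} {k : ℕ} (h : t.par^[k] n = a) : t.dist a n ≤ k := Nat.sInf_le h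

lemma dist_self (a : N) : t.dist a a = 0 := Nat.le_zero.mp (t.dist_le rfl)

lemma dist_pos {a n : N} (h : t.sanc a n) : 0 < t.dist a n := by
  refine Nat.pos_of_ne_zero fun h0 => h.2 ?_
  simpa [h0] using (t.dist_spec h.1).symm

lemma dist_iterate {a n : N} (h : t.anc a n) {k : ℕ} (hk : k ≤ t.dist a n) :
    t.dist a (t.par^[k] n) = t.dist a n - k := by
  have hsplit : t.par^[t.dist a n - k] (t.par^[k] n) = a := by
    rw [t.iterate_sub_iterate hk, t.dist_spec h]
  refine le_antisymm (t.dist_le hsplit) ?_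
  have := t.dist_le (n := n) (k := t.dist a (t.par^[k] n) + k)
    (by rw [Function.iterate_add_apply, t.dist_spec ⟨_, hsplit⟩])
  omega

lemma exists_child_anc {a n : N} (h : t.sanc a n) : ∃ c ∈ t.children a, t.anc c n := by
  have hd := t.dist_pos h
  have hpar : t.par (t.par^[t.dist a n - 1] n) = a := by
    rw [← Function.iterate_succ_apply' t.par, Nat.succ_eq_add_one, Nat.sub_add_cancel hd,
      t.dist_spec h.1]
  refine ⟨_, ⟨fun hroot => ?_, hpar⟩, _, rfl⟩
  have hra : t.root = a := by rw [← hpar, hroot, t.par_root]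
  have := t.dist_le (hroot.trans hra)
  omega

lemma dist_add_dist {a b n : N} (hab : t.anc a b) (hbn : t.anc b n) :
    t.dist a b + t.dist b n = t.dist a n := by
  have hb := t.dist_spec hbn
  have hn : t.par^[t.dist a n] n = a := t.dist_spec (t.anc_trans hab hbn)
  have hk : t.dist b n ≤ t.dist a n := by
    by_contra! hlt
    have hba := t.iterate_sub_iterate hlt.le n
    rw [hn, hb] at hba
    have hab' := t.anc_antisymm hab ⟨_, hba⟩
    subst hab'
    exact absurd (t.dist_le hn) (by omega)
  have hba := t.iterate_sub_iterate hk n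
  rw [hb, hn] at hba
  refine le_antisymm (by have := t.dist_le hba; omega) (t.dist_le ?_)
  rw [Function.iterate_add_apply, hb, t.dist_spec hab]

lemma dist_of_mem_children {a c n : N} (hc : c ∈ t.children a) (hcn : t.anc c n) :
    t.anc a n ∧ t.dist a n = t.dist c n + 1 := by
  have hac : t.anc a c := ⟨1, hc.2⟩
  have hne : a ≠ c := fun h => hc.1 (t.eq_root_of_isPeriodicPt one_pos (h ▸ hc.2 :))
  have h1 := t.dist_pos ⟨hac, hne⟩
  have h2 := t.dist_le (n := c) (k := 1) hc.2
  refine ⟨t.anc_trans hac hcn, ?_⟩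
  rw [← t.dist_add_dist hac hcn]
  omega

end ParentTree

namespace Policy

variable {N : Type*} {t : ParentTree N} (P : Policy t)

lemma relProbE_self (a : N) : P.relProbE a a = 1 := by
  simp [relProbE, t.dist_self]

lemma relProbE_le_one (a n : N) : P.relProbE a n ≤ 1 :=
  Finset.prod_le_one (fun _ _ => zero_le) fun _ _ => ENNReal.ofReal_le_one.mpr (P.cond_le_one _)

lemma relProbE_of_mem_children {a c n : N} (hc : c ∈ t.children a) (hcn : t.anc c n)
    {k : ℕ} (hk : k ≤ t.dist c n) :
    P.relProbE a (t.par^[k] n) = P.relProbE c (t.par^[k] n) * ENNReal.ofReal (P.cond c) := by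
  obtain ⟨han, hdist⟩ := t.dist_of_mem_children hc hcn
  rw [relProbE, relProbE, t.dist_iterate hcn hk, t.dist_iterate han (by omega), hdist,
    Nat.succ_sub hk, Finset.prod_range_succ, t.iterate_sub_iterate hk, t.dist_spec hcn]

lemma rootSlend_of_anc {a n : N} (h : t.anc a n) :
    P.rootSlend a n =
      ∑ k ∈ Finset.range (t.dist a n + 1), (P.relProbE a (t.par^[k] n))⁻¹ :=
  if_pos h

lemma rootSlend_self (a : N) : P.rootSlend a a = 1 := by
  simp [P.rootSlend_of_anc (t.anc_refl a), t.dist_self, P.relProbE_self]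

lemma dist_add_one_le_rootSlend {a n : N} (h : t.anc a n) :
    (t.dist a n + 1 : ℝ≥0∞) ≤ P.rootSlend a n := by
  rw [P.rootSlend_of_anc h]
  calc (t.dist a n + 1 : ℝ≥0∞) = ∑ _k ∈ Finset.range (t.dist a n + 1), 1 := by simp
    _ ≤ _ := Finset.sum_le_sum fun k _ => ENNReal.one_le_inv.mpr (P.relProbE_le_one _ _)

lemma one_le_rootSlend (a n : N) : 1 ≤ P.rootSlend a n := by
  by_cases h : t.anc a n
  · exact le_trans (by simp) (P.dist_add_one_le_rootSlend h)
  · simp [rootSlend, h]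

lemma two_le_rootSlend {a n : N} (h : t.sanc a n) : 2 ≤ P.rootSlend a n := by
  refine le_trans ?_ (P.dist_add_one_le_rootSlend h.1)
  have := t.dist_pos h
  exact_mod_cast (by omega : 2 ≤ t.dist a n + 1)

lemma rootSlend_mono {a b n : N} (hab : t.anc a b) (hbn : t.anc b n) :
    P.rootSlend a b ≤ P.rootSlend a n := by
  have hdist := t.dist_add_dist hab hbn
  rw [P.rootSlend_of_anc hab, P.rootSlend_of_anc (t.anc_trans hab hbn), ← hdist]
  calc ∑ j ∈ Finset.range (t.dist a b + 1), (P.relProbE a (t.par^[j] b))⁻¹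
      = ∑ k ∈ Finset.Ico (t.dist b n) (t.dist a b + t.dist b n + 1),
          (P.relProbE a (t.par^[k] n))⁻¹ := by
        rw [Finset.sum_Ico_eq_sum_range, show t.dist a b + t.dist b n + 1 - t.dist b n =
          t.dist a b + 1 by omega]
        refine Finset.sum_congr rfl fun j _ => ?_
        rw [add_comm, Function.iterate_add_apply, t.dist_spec hbn]
    _ ≤ _ := Finset.sum_le_sum_of_subset fun k hk => by
        simp only [Finset.mem_Ico, Finset.mem_range] at hk ⊢; omega

lemma rootSlend_of_mem_children {a c n : N} (hc : c ∈ t.children a) (hcn : t.anc c n) :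
    P.rootSlend a n = 1 + (ENNReal.ofReal (P.cond c))⁻¹ * P.rootSlend c n := by
  obtain ⟨han, hdist⟩ := t.dist_of_mem_children hc hcn
  have hlast : t.par^[t.dist c n + 1] n = a := by
    rw [Function.iterate_succ_apply', t.dist_spec hcn, hc.2]
  rw [P.rootSlend_of_anc han, P.rootSlend_of_anc hcn, hdist, Finset.sum_range_succ, hlast,
    P.relProbE_self, inv_one, add_comm, Finset.mul_sum]
  congr 1
  refine Finset.sum_congr rfl fun k hk => ?_
  rw [P.relProbE_of_mem_children hc hcn (by simpa [Nat.lt_succ_iff] using hk),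
    ENNReal.mul_inv (.inr ENNReal.ofReal_ne_top) (.inl (ne_top_of_le_ne_top ENNReal.one_ne_top
      (P.relProbE_le_one _ _))), mul_comm]

lemma rootSlend_le_of_mem_children {a c n : N} {B : ℝ} (hc : c ∈ t.children a)
    (hcn : t.anc c n) (h : P.rootSlend a n ≤ ENNReal.ofReal B) :
    P.rootSlend c n ≤ ENNReal.ofReal (P.cond c * (B - 1)) := by
  rw [P.rootSlend_of_mem_children hc hcn] at h
  have h' : (ENNReal.ofReal (P.cond c))⁻¹ * P.rootSlend c n ≤ ENNReal.ofReal (B - 1) := by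
    rw [ENNReal.ofReal_sub _ zero_le_one, ENNReal.ofReal_one]
    exact ENNReal.le_sub_of_add_le_left ENNReal.one_ne_top h
  have hc0 : ENNReal.ofReal (P.cond c) ≠ 0 := by
    intro h0
    rw [h0, ENNReal.inv_zero, ENNReal.top_mul (one_pos.trans_le (P.one_le_rootSlend c n)).ne']
      at h'
    exact ENNReal.ofReal_ne_top (top_le_iff.1 h')
  rw [ENNReal.ofReal_mul (P.cond_nonneg c)]
  exact (ENNReal.inv_mul_le_iff hc0 ENNReal.ofReal_ne_top).1 h'

/-- Induction on the size of `B`, via `Λ(n | a) = 1 + Λ(n | c) / π(c)` for the child `c` of `a`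
towards `n`: the descendants of `a` other than `a` split by `c` into sets of slenderness at most
`π(c) (B - 1)` relative to `c`, and `Σ_c π(c) ≤ 1`. -/
theorem card_le_of_rootSlend_le {a : N} {B : ℝ} (hB : 0 ≤ B) {s : Finset N}
    (hs : ∀ n ∈ s, t.anc a n ∧ P.rootSlend a n ≤ ENNReal.ofReal B) : (s.card : ℝ) ≤ B := by
  obtain ⟨K, hK⟩ := exists_nat_gt B
  induction K generalizing a B s with
  | zero => push_cast at hK; linarith
  | succ K ih =>
    rcases lt_or_ge B 1 with hB1 | hB1
    · have : s = ∅ := Finset.eq_empty_of_forall_notMem fun n hn =>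
        (((P.one_le_rootSlend a n).trans (hs n hn).2).trans_lt
          (ENNReal.ofReal_lt_one.2 hB1)).false
      simp [this, hB]
    have hchild : ∀ n ∈ s.erase a, ∃ c ∈ t.children a, t.anc c n := fun n hn =>
      t.exists_child_anc ⟨(hs n (Finset.mem_of_mem_erase hn)).1, (Finset.ne_of_mem_erase hn).symm⟩
    choose! c hc hcn using hchild
    have hfiber : ∀ d ∈ (s.erase a).image c,
        (((s.erase a).filter (c · = d)).card : ℝ) ≤ P.cond d * (B - 1) := by
      intro d hd
      obtain ⟨n₀, hn₀, rfl⟩ := Finset.mem_image.1 hd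
      refine ih (a := c n₀) (mul_nonneg (P.cond_nonneg _) (by linarith)) (fun n hn => ?_) ?_
      · obtain ⟨hn, hcn₀⟩ := Finset.mem_filter.1 hn
        have hanc := hcn n hn
        rw [hcn₀] at hanc
        exact ⟨hanc, P.rootSlend_le_of_mem_children (hc n₀ hn₀) hanc
          (hs n (Finset.mem_of_mem_erase hn)).2⟩
      · have := mul_le_mul_of_nonneg_right (P.cond_le_one (c n₀)) (sub_nonneg.2 hB1)
        push_cast at hK
        linarith
    have hsum : ∑ d ∈ (s.erase a).image c, P.cond d ≤ 1 := by
      refine P.sum_le_one a _ fun d hd => ?_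
      obtain ⟨n, hn, rfl⟩ := Finset.mem_image.1 hd
      exact hc n hn
    have herase : ((s.erase a).card : ℝ) ≤ B - 1 := by
      rw [Finset.card_eq_sum_card_image c (s.erase a)]
      push_cast
      calc _ ≤ ∑ d ∈ (s.erase a).image c, P.cond d * (B - 1) := Finset.sum_le_sum hfiber
        _ = (∑ d ∈ (s.erase a).image c, P.cond d) * (B - 1) := (Finset.sum_mul ..).symm
        _ ≤ B - 1 := mul_le_of_le_one_left (by linarith) hsum
    have hcard : (s.card : ℝ) ≤ (s.erase a).card + 1 := by
      exact_mod_cast (by have := Finset.pred_card_le_card_erase (s := s) (a := a); omega :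
        s.card ≤ (s.erase a).card + 1)
    linarith

end Policy

namespace IsRootLTS

variable {N : Type*} {t : ParentTree N} {P : Policy t} {visit : ℕ → N} {Q : ℕ → Set N}
  {w : ℕ → ℝ≥0} {T : ℕ}

lemma queue_nonempty_of_le (hrun : IsRootLTS t P visit Q w) (hQT : (Q T).Nonempty) {s : ℕ}
    (hs : 1 ≤ s) (hsT : s ≤ T) : (Q s).Nonempty := by
  obtain ⟨d, rfl⟩ := Nat.exists_eq_add_of_le hsT
  clear hsT
  contrapose! hQT
  induction d with
  | zero => exact hQT
  | succ d ih => exact hrun.2.2.1 (s + d) (by omega) ih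

lemma visit_one (hrun : IsRootLTS t P visit Q w) : visit 1 = t.root := by
  simpa [hrun.1] using (hrun.2.1 1 le_rfl (by simp [hrun.1])).1

lemma injOn_visit (hrun : IsRootLTS t P visit Q w) (hQT : (Q T).Nonempty) :
    Set.InjOn visit (Set.Icc 1 T) := fun s hs s' hs' h =>
  hrun.2.2.2 s s' hs.1 hs'.1 (hrun.queue_nonempty_of_le hQT hs.1 hs.2)
    (hrun.queue_nonempty_of_le hQT hs'.1 hs'.2) h

lemma exists_visit_eq_of_sanc (hrun : IsRootLTS t P visit Q w) {s : ℕ} (hs : 1 ≤ s) {n : N}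
    (hn : n ∈ Q s) {b : N} (hb : t.sanc b n) :
    ∃ u, 1 ≤ u ∧ u < s ∧ (Q u).Nonempty ∧ visit u = b := by
  induction s, hs using Nat.le_induction generalizing n with
  | base =>
    rw [hrun.1, Set.mem_singleton_iff] at hn
    subst hn
    exact absurd (t.eq_root_of_anc_root hb.1) hb.2
  | succ s hs ih =>
    rcases Set.eq_empty_or_nonempty (Q s) with hQs | hQs
    · simp [hrun.2.2.1 s hs hQs] at hn
    obtain ⟨hvs, -, hQ⟩ := hrun.2.1 s hs hQs
    rw [hQ] at hn
    rcases hn with ⟨hn, -⟩ | ⟨-, hpar⟩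
    · obtain ⟨u, hu1, hus, hQu, hvu⟩ := ih hn hb
      exact ⟨u, hu1, by omega, hQu, hvu⟩
    by_cases hbv : b = visit s
    · exact ⟨s, hs, by omega, hQs, hbv.symm⟩
    · obtain ⟨u, hu1, hus, hQu, hvu⟩ := ih hvs ⟨hpar ▸ t.anc_par_of_sanc hb, hbv⟩
      exact ⟨u, hu1, by omega, hQu, hvu⟩

lemma exists_mem_queue_anc (hrun : IsRootLTS t P visit Q w) (hQT : (Q T).Nonempty) {s : ℕ}
    (hs : 1 ≤ s) (hsT : s ≤ T) : ∃ a ∈ Q s, t.anc a (visit T) := by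
  induction hd : T - s generalizing s with
  | zero =>
    obtain rfl : s = T := by omega
    exact ⟨visit s, (hrun.2.1 s hs hQT).1, t.anc_refl _⟩
  | succ d ih =>
    obtain ⟨a, ha, hanc⟩ := ih (s := s + 1) (by omega) (by omega) (by omega)
    obtain ⟨hvs, -, hQ⟩ := hrun.2.1 s hs (hrun.queue_nonempty_of_le hQT hs hsT)
    rw [hQ] at ha
    rcases ha with ⟨ha, -⟩ | ⟨-, hpar⟩
    · exact ⟨a, ha, hanc⟩
    · exact ⟨visit s, hvs, t.anc_trans ⟨1, hpar⟩ hanc⟩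

lemma runCost_visit_le (hrun : IsRootLTS t P visit Q w) (hQT : (Q T).Nonempty) {C : ℝ≥0∞}
    (hC : ∀ a, t.anc a (visit T) → runCost t P visit Q w a ≤ C) {s : ℕ} (hs : 1 ≤ s)
    (hsT : s ≤ T) : runCost t P visit Q w (visit s) ≤ C := by
  obtain ⟨a, haQ, ha⟩ := hrun.exists_mem_queue_anc hQT hs hsT
  exact ((hrun.2.1 s hs (hrun.queue_nonempty_of_le hQT hs hsT)).2.1 a haQ).trans (hC a ha)

lemma exists_reroot_of_runCost_le (hrun : IsRootLTS t P visit Q w) {u : ℕ} (hu : 2 ≤ u)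
    (hQu : (Q u).Nonempty) {c : ℝ≥0} (hc : runCost t P visit Q w (visit u) ≤ c) :
    ∃ s ∈ Finset.Ico 1 u, t.sanc (visit s) (visit u) ∧
      P.rootSlend (visit s) (visit u) ≤ ((1 + w s * c : ℝ≥0) : ℝ≥0∞) := by
  have hQ1 : (Q 1).Nonempty := by simp [hrun.1]
  have hne : visit u ≠ t.root := fun h => by
    have := hrun.2.2.2 u 1 (by omega) le_rfl hQu hQ1 (h.trans hrun.visit_one.symm)
    omega
  set S := {s : ℕ | 1 ≤ s ∧ (Q s).Nonempty ∧ t.sanc (visit s) (visit u)}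
  have hSu : S ⊆ Set.Iio u := by
    rintro s ⟨hs1, hQs, hsanc⟩
    obtain ⟨s', hs'1, hs'u, hQs', hv⟩ :=
      hrun.exists_visit_eq_of_sanc (by omega) (hrun.2.1 u (by omega) hQu).1 hsanc
    rw [hrun.2.2.2 s s' hs1 hs'1 hQs hQs' hv.symm]
    exact hs'u
  have h1S : 1 ∈ S := ⟨le_rfl, hQ1, by rw [hrun.visit_one]; exact ⟨t.anc_root _, Ne.symm hne⟩⟩
  obtain ⟨s, hs, hmin⟩ := S.exists_min_image
    (fun s => (P.rootSlend (visit s) (visit u) - 1) / w s)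
    ((Set.finite_Iio u).subset hSu) ⟨1, h1S⟩
  have hsc : (P.rootSlend (visit s) (visit u) - 1) / w s ≤ c := by
    refine le_trans ?_ hc
    rw [runCost, if_neg hne]
    exact le_iInf₂ hmin
  rw [ENNReal.div_le_iff_le_mul (.inr ENNReal.coe_ne_top) (.inl ENNReal.coe_ne_top)] at hsc
  refine ⟨s, Finset.mem_Ico.2 ⟨hs.1, hSu hs⟩, hs.2.2, ?_⟩
  push_cast
  rw [add_comm, mul_comm]
  exact tsub_le_iff_right.1 hsc

end IsRootLTS

lemma one_le_sub_one_div {L w : ℝ≥0∞} (hL : 2 ≤ L) (hw : w ≤ 1) : 1 ≤ (L - 1) / w :=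
  calc 1 ≤ L - 1 := ENNReal.le_sub_of_add_le_left ENNReal.one_ne_top (by rwa [one_add_one_eq_two])
    _ = (L - 1) / 1 := (div_one _).symm
    _ ≤ (L - 1) / w := ENNReal.div_le_div_left hw _

lemma one_le_of_chain {m : ℕ} {Ts : ℕ → ℕ} (hTs1 : 1 ≤ Ts 1)
    (hmono : ∀ i j : ℕ, 1 ≤ i → i < j → j ≤ m → Ts i < Ts j) {i : ℕ} (hi : 1 ≤ i) (him : i ≤ m) :
    1 ≤ Ts i := by
  rcases hi.eq_or_lt with rfl | h
  exacts [hTs1, hTs1.trans (hmono 1 i le_rfl h him).le]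

lemma runCost_le_of_chain {N : Type*} {t : ParentTree N} {P : Policy t} {visit : ℕ → N}
    {Q : ℕ → Set N} {w : ℕ → ℝ≥0} {m : ℕ} {Ts : ℕ → ℕ} {C : ℝ≥0∞}
    (hTs : ∀ i, 1 ≤ i → i < m → 1 ≤ Ts i ∧ (Q (Ts i)).Nonempty)
    (hfirst : visit (Ts 1) = t.root)
    (hchain : ∀ i, 1 ≤ i → i < m → t.sanc (visit (Ts i)) (visit (Ts (i + 1))))
    (hC : ∀ i, 1 ≤ i → i < m →
      (P.rootSlend (visit (Ts i)) (visit (Ts (i + 1))) - 1) / w (Ts i) ≤ C)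
    (h1C : 1 ≤ C) {j : ℕ} (hj : 1 ≤ j) (hjm : j ≤ m) {a : N} (ha : t.anc a (visit (Ts j))) :
    runCost t P visit Q w a ≤ C := by
  by_cases hroot : a = t.root
  · rw [runCost, if_pos hroot]
    exact h1C
  induction j, hj using Nat.le_induction generalizing a with
  | base => exact absurd (t.eq_root_of_anc_root (hfirst ▸ ha)) hroot
  | succ j hj ih =>
    rcases t.anc_total ha (hchain j hj (by omega)).1 with h | h
    · exact ih (by omega) h hroot
    by_cases heq : visit (Ts j) = a
    · exact ih (by omega) (heq ▸ t.anc_refl _) hroot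
    rw [runCost, if_neg hroot]
    refine iInf₂_le_of_le (Ts j) ⟨(hTs j hj (by omega)).1, (hTs j hj (by omega)).2, h, heq⟩ ?_
    exact (ENNReal.div_le_div_right (tsub_le_tsub_right (P.rootSlend_mono h ha) 1) _).trans
      (hC j hj (by omega))

theorem Policy.sub_one_le_sum_mul_of_reroots {N : Type*} {t : ParentTree N} (P : Policy t)
    {visit : ℕ → N} {w : ℕ → ℝ≥0} {T : ℕ} {c : ℝ≥0} (hinj : Set.InjOn visit (Set.Icc 1 T))
    (hre : ∀ u ∈ Finset.Icc 2 T, ∃ s ∈ Finset.Ico 1 T, t.sanc (visit s) (visit u) ∧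
      P.rootSlend (visit s) (visit u) ≤ ((1 + w s * c : ℝ≥0) : ℝ≥0∞)) :
    (T : ℝ) - 1 ≤ (∑ s ∈ Finset.Ico 1 T, (w s : ℝ)) * c := by
  set U : ℕ → Finset ℕ := fun s => (Finset.Icc 2 T).filter fun u =>
    t.sanc (visit s) (visit u) ∧ P.rootSlend (visit s) (visit u) ≤ ((1 + w s * c : ℝ≥0) : ℝ≥0∞)
  have hcover : Finset.Icc 2 T ⊆ (Finset.Ico 1 T).biUnion U := fun u hu => by
    obtain ⟨s, hs, h⟩ := hre u hu
    exact Finset.mem_biUnion.2 ⟨s, hs, Finset.mem_filter.2 ⟨hu, h⟩⟩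
  have hfiber : ∀ s, ((U s).card : ℝ) ≤ w s * c := by
    intro s
    have hinjU : Set.InjOn visit (U s) := hinj.mono fun u hu => by
      obtain ⟨hu2, huT⟩ := Finset.mem_Icc.1 (Finset.mem_filter.1 (Finset.mem_coe.1 hu)).1
      exact ⟨by omega, huT⟩
    have hnot : visit s ∉ (U s).image visit := by
      simp only [U, Finset.mem_image, Finset.mem_filter]
      rintro ⟨u, ⟨-, h, -⟩, hu⟩
      exact h.2 hu.symm
    have hball : ∀ n ∈ insert (visit s) ((U s).image visit), t.anc (visit s) n ∧
        P.rootSlend (visit s) n ≤ ENNReal.ofReal ((1 + w s * c : ℝ≥0) : ℝ) := by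
      simp only [ENNReal.ofReal_coe_nnreal, Finset.mem_insert, Finset.mem_image, U,
        Finset.mem_filter]
      rintro n (rfl | ⟨u, ⟨-, h, hle⟩, rfl⟩)
      · exact ⟨t.anc_refl _, by simp [P.rootSlend_self]⟩
      · exact ⟨h.1, hle⟩
    have := P.card_le_of_rootSlend_le NNReal.zero_le_coe hball
    rw [Finset.card_insert_of_notMem hnot, Finset.card_image_of_injOn hinjU] at this
    push_cast at this
    linarith
  calc (T : ℝ) - 1 ≤ (Finset.Icc 2 T).card := sub_le_iff_le_add.2 <| by
        exact_mod_cast (by rw [Nat.card_Icc]; omega : T ≤ (Finset.Icc 2 T).card + 1)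
    _ ≤ ((Finset.Ico 1 T).biUnion U).card := by exact_mod_cast Finset.card_le_card hcover
    _ ≤ ∑ s ∈ Finset.Ico 1 T, ((U s).card : ℝ) := by exact_mod_cast Finset.card_biUnion_le
    _ ≤ ∑ s ∈ Finset.Ico 1 T, (w s : ℝ) * c := Finset.sum_le_sum fun s _ => hfiber s
    _ = _ := (Finset.sum_mul ..).symm

theorem IsRootLTS.sub_one_le_sum_mul {N : Type*} {t : ParentTree N} {P : Policy t}
    {visit : ℕ → N} {Q : ℕ → Set N} {w : ℕ → ℝ≥0} (hrun : IsRootLTS t P visit Q w) {T : ℕ}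
    (hQT : (Q T).Nonempty) {m : ℕ} (hm : 2 ≤ m) {Ts : ℕ → ℕ} (hTs1 : 1 ≤ Ts 1)
    (hTsm : Ts m = T) (hmono : ∀ i j : ℕ, 1 ≤ i → i < j → j ≤ m → Ts i < Ts j)
    (hfirst : visit (Ts 1) = t.root)
    (hchain : ∀ i, 1 ≤ i → i < m → t.sanc (visit (Ts i)) (visit (Ts (i + 1))))
    (hw : w (Ts 1) ≤ 1) {c : ℝ≥0}
    (hc : ∀ i, 1 ≤ i → i < m →
      (P.rootSlend (visit (Ts i)) (visit (Ts (i + 1))) - 1) / w (Ts i) ≤ c) :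
    (T : ℝ) - 1 ≤ (∑ s ∈ Finset.Ico 1 T, (w s : ℝ)) * c := by
  have hTs : ∀ i, 1 ≤ i → i < m → 1 ≤ Ts i ∧ Ts i < T := fun i hi him =>
    ⟨one_le_of_chain hTs1 hmono hi him.le, hTsm ▸ hmono i m hi him le_rfl⟩
  have hQ : ∀ i, 1 ≤ i → i < m → 1 ≤ Ts i ∧ (Q (Ts i)).Nonempty := fun i hi him =>
    ⟨(hTs i hi him).1, hrun.queue_nonempty_of_le hQT (hTs i hi him).1 (hTs i hi him).2.le⟩
  have h1c : 1 ≤ (c : ℝ≥0∞) := le_trans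
    (one_le_sub_one_div (P.two_le_rootSlend (hchain 1 le_rfl (by omega))) (by exact_mod_cast hw))
    (hc 1 le_rfl (by omega))
  have hcost : ∀ a, t.anc a (visit T) → runCost t P visit Q w a ≤ c := fun a ha =>
    runCost_le_of_chain hQ hfirst hchain hc h1c (by omega : 1 ≤ m) le_rfl (hTsm ▸ ha)
  refine P.sub_one_le_sum_mul_of_reroots (hrun.injOn_visit hQT) fun u hu => ?_
  obtain ⟨hu2, huT⟩ := Finset.mem_Icc.1 hu
  obtain ⟨s, hs, h⟩ := hrun.exists_reroot_of_runCost_le hu2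
    (hrun.queue_nonempty_of_le hQT (by omega) huT) (hrun.runCost_visit_le hQT hcost (by omega) huT)
  exact ⟨s, Finset.Ico_subset_Ico_right huT hs, h⟩

theorem sum_div_partialSum_le_one_add_log {a : ℕ → ℝ} (ha : ∀ k, 1 ≤ k → 0 < a k) {n : ℕ}
    (hn : 2 ≤ n) :
    ∑ k ∈ Finset.Ico 1 n, a k / ∑ j ∈ Finset.Icc 1 k, a j ≤
      1 + Real.log ((∑ k ∈ Finset.Ico 1 n, a k) / a 1) := by
  induction n, hn using Nat.le_induction with
  | base => simp [(ha 1 le_rfl).ne']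
  | succ n hn ih =>
    set S := ∑ k ∈ Finset.Ico 1 n, a k
    have hS : 0 < S := Finset.sum_pos (fun k hk => ha k (Finset.mem_Ico.1 hk).1)
      ⟨1, Finset.mem_Ico.2 ⟨le_rfl, by omega⟩⟩
    have han := ha n (by omega)
    have hIcc : ∑ j ∈ Finset.Icc 1 n, a j = S + a n := by
      rw [← Finset.Ico_add_one_right_eq_Icc, Finset.sum_Ico_succ_top (by omega)]
    have hstep : a n / (S + a n) ≤ Real.log ((S + a n) / a 1) - Real.log (S / a 1) := by
      rw [← Real.log_div (div_pos (add_pos hS han) (ha 1 le_rfl)).ne'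
        (div_pos hS (ha 1 le_rfl)).ne', div_div_div_cancel_right₀ (ha 1 le_rfl).ne']
      have := Real.one_sub_inv_le_log_of_pos (div_pos (add_pos hS han) hS)
      rw [inv_div] at this
      calc a n / (S + a n) = 1 - S / (S + a n) := by field_simp; ring
        _ ≤ _ := this
    rw [Finset.sum_Ico_succ_top (by omega), Finset.sum_Ico_succ_top (by omega), hIcc]
    linarith

lemma Finset.sup_sub_one_div_add_one_le {ι : Type*} {s : Finset ι} (hs : s.Nonempty)
    {ω Ω : ι → ℝ≥0} {L : ι → ℝ≥0∞} (hω : ∀ i ∈ s, 0 < ω i) (hle : ∀ i ∈ s, ω i ≤ Ω i)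
    (hL : ∀ i ∈ s, 1 ≤ L i) :
    s.sup (fun i => (L i - 1) / ((ω i / Ω i : ℝ≥0) : ℝ≥0∞)) + 1 ≤
      s.sup fun i => (Ω i : ℝ≥0∞) / ω i * L i := by
  obtain ⟨i, hi, hsup⟩ := s.exists_mem_eq_sup hs fun i => (L i - 1) / ((ω i / Ω i : ℝ≥0) : ℝ≥0∞)
  rw [hsup]
  refine le_trans ?_ (Finset.le_sup (f := fun i => (Ω i : ℝ≥0∞) / ω i * L i) hi)
  have hω0 : (ω i : ℝ≥0∞) ≠ 0 := by exact_mod_cast (hω i hi).ne'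
  have hΩ0 : Ω i ≠ 0 := ((hω i hi).trans_le (hle i hi)).ne'
  have hD : 1 ≤ (Ω i : ℝ≥0∞) / ω i := by
    rw [ENNReal.le_div_iff_mul_le (.inl hω0) (.inl ENNReal.coe_ne_top), one_mul]
    exact_mod_cast hle i hi
  rw [ENNReal.coe_div hΩ0, div_eq_mul_inv, ENNReal.inv_div (.inl ENNReal.coe_ne_top)
    (.inl (by exact_mod_cast hΩ0))]
  calc (L i - 1) * (Ω i / ω i) + 1 ≤ (L i - 1) * (Ω i / ω i) + Ω i / ω i := by gcongr
    _ = Ω i / ω i * L i := by rw [← add_one_mul, tsub_add_cancel_of_le (hL i hi), mul_comm]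

lemma natCast_le_ofReal_one_add_mul {T : ℕ} {S ℓ : ℝ} {c : ℝ≥0} (hT : (T : ℝ) - 1 ≤ S * c)
    (hS : S ≤ 1 + ℓ) (hℓ : 0 ≤ ℓ) : (T : ℝ≥0∞) ≤ ENNReal.ofReal (1 + ℓ) * (c + 1) := by
  have hreal : (T : ℝ) ≤ (1 + ℓ) * (c + 1) := by
    nlinarith [mul_le_mul_of_nonneg_right hS c.coe_nonneg, c.coe_nonneg]
  calc (T : ℝ≥0∞) = ENNReal.ofReal T := (ENNReal.ofReal_natCast T).symm
    _ ≤ ENNReal.ofReal ((1 + ℓ) * (c + 1)) := ENNReal.ofReal_le_ofReal hreal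
    _ = ENNReal.ofReal (1 + ℓ) * (c + 1) := by
      rw [ENNReal.ofReal_mul (by positivity), ENNReal.ofReal_add c.coe_nonneg zero_le_one,
        ENNReal.ofReal_coe_nnreal, ENNReal.ofReal_one]

theorem stmt12_general {N : Type*} (t : ParentTree N)
    (P : Policy t)
    (ω : ℕ → ℝ≥0) (hω : ∀ k : ℕ, 1 ≤ k → 0 < ω k)
    (visit : ℕ → N) (Q : ℕ → Set N)
    (hrun : IsRootLTS t P visit Q (fun k => ω k / ∑ j ∈ Finset.Icc 1 k, ω j))
    (T : ℕ) (hQT : (Q T).Nonempty)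
    (m : ℕ) (hm : 2 ≤ m) (Ts : ℕ → ℕ)
    (hTs1 : 1 ≤ Ts 1) (hTsm : Ts m = T)
    (hmono : ∀ i j : ℕ, 1 ≤ i → i < j → j ≤ m → Ts i < Ts j)
    (hfirst : visit (Ts 1) = t.root)
    (hchain : ∀ i : ℕ, 1 ≤ i → i < m → t.sanc (visit (Ts i)) (visit (Ts (i + 1)))) :
    (T : ℝ≥0∞) ≤
      ENNReal.ofReal
          (1 + Real.log ((∑ k ∈ Finset.Ico 1 T, (ω k : ℝ)) / (ω 1 : ℝ))) *
        (Finset.Ico 1 m).sup (fun i =>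
          ((∑ k ∈ Finset.Icc 1 (Ts i), ω k : ℝ≥0) : ℝ≥0∞) / ((ω (Ts i) : ℝ≥0) : ℝ≥0∞) *
            P.rootSlend (visit (Ts i)) (visit (Ts (i + 1)))) := by
  set w : ℕ → ℝ≥0 := fun k => ω k / ∑ j ∈ Finset.Icc 1 k, ω j
  set C := (Finset.Ico 1 m).sup fun i =>
    (P.rootSlend (visit (Ts i)) (visit (Ts (i + 1))) - 1) / (w (Ts i) : ℝ≥0∞)
  have hΩ : ∀ k, 1 ≤ k → ω k ≤ ∑ j ∈ Finset.Icc 1 k, ω j := fun k hk =>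
    Finset.single_le_sum (fun _ _ => zero_le) (Finset.mem_Icc.2 ⟨hk, le_rfl⟩)
  have hTs : ∀ i ∈ Finset.Ico 1 m, 1 ≤ Ts i := fun i hi =>
    one_le_of_chain hTs1 hmono (Finset.mem_Ico.1 hi).1 (Finset.mem_Ico.1 hi).2.le
  have hT : 2 ≤ T := by have := hmono 1 m le_rfl (by omega) le_rfl; omega
  have hCM : C + 1 ≤ _ := Finset.sup_sub_one_div_add_one_le ⟨1, by simp; omega⟩
    (fun i hi => hω _ (hTs i hi)) (fun i hi => hΩ _ (hTs i hi))
    (fun i _ => P.one_le_rootSlend (visit (Ts i)) (visit (Ts (i + 1))))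
  have hlog : 0 ≤ Real.log ((∑ k ∈ Finset.Ico 1 T, (ω k : ℝ)) / (ω 1 : ℝ)) := by
    refine Real.log_nonneg ((one_le_div (by exact_mod_cast hω 1 le_rfl)).2 ?_)
    exact Finset.single_le_sum (fun _ _ => NNReal.coe_nonneg _) (by simp; omega)
  rcases eq_or_ne C ⊤ with hC | hC
  · rw [hC, top_add, top_le_iff] at hCM
    rw [hCM, ENNReal.mul_top (by simp; linarith)]
    exact le_top
  obtain ⟨c, hc⟩ := WithTop.ne_top_iff_exists.1 hC
  rw [← hc] at hCM
  have hcount := hrun.sub_one_le_sum_mul hQT hm hTs1 hTsm hmono hfirst hchain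
    (div_le_one_of_le₀ (hΩ _ hTs1) zero_le) (c := c) fun i hi him =>
      (Finset.le_sup (f := fun i => (P.rootSlend (visit (Ts i)) (visit (Ts (i + 1))) - 1) /
        (w (Ts i) : ℝ≥0∞)) (Finset.mem_Ico.2 ⟨hi, him⟩)).trans_eq hc.symm
  have hsum : ∑ s ∈ Finset.Ico 1 T, (w s : ℝ) ≤
      1 + Real.log ((∑ k ∈ Finset.Ico 1 T, (ω k : ℝ)) / (ω 1 : ℝ)) := by
    simp only [w, NNReal.coe_div, NNReal.coe_sum]
    exact sum_div_partialSum_le_one_add_log (fun k hk => by exact_mod_cast hω k hk) hT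
  exact (natCast_le_ofReal_one_add_mul hcount hsum hlog).trans (mul_le_mul_right hCM _)

/-- robust √LTS guarantee: with input rerooting weights `ω_t > 0`,
`Ω_{≤t} = Σ_{k≤t} ω_k`, and rerooting weights `w_t = ω_t/Ω_{≤t}`, if `n_T` is visited at
step `T` of a √LTS run with these weights, then for every subtask decomposition
`T_1 < … < T_m` of `n_T`,
`T ≤ (1 + ln(Ω_{<T}/ω_1)) · max_{1 ≤ i < m} (Ω_{≤T_i}/ω_{T_i}) Λ(n_{T_{i+1}} | n_{T_i})`. -/
theorem stmt12 {N : Type*} (t : ParentTree N) (hfin : ∀ n : N, (t.children n).Finite)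
    (P : Policy t) (hpos : ∀ m : N, m ≠ t.root → 0 < P.cond m)
    (ω : ℕ → ℝ≥0) (hω : ∀ k : ℕ, 1 ≤ k → 0 < ω k)
    (visit : ℕ → N) (Q : ℕ → Set N)
    (hrun : IsRootLTS t P visit Q (fun k => ω k / ∑ j ∈ Finset.Icc 1 k, ω j))
    (T : ℕ) (hT : 1 ≤ T) (hQT : (Q T).Nonempty)
    (m : ℕ) (hm : 2 ≤ m) (Ts : ℕ → ℕ)
    (hTs1 : 1 ≤ Ts 1) (hTsm : Ts m = T)
    (hmono : ∀ i j : ℕ, 1 ≤ i → i < j → j ≤ m → Ts i < Ts j)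
    (hfirst : visit (Ts 1) = t.root)
    (hchain : ∀ i : ℕ, 1 ≤ i → i < m → t.sanc (visit (Ts i)) (visit (Ts (i + 1)))) :
    (T : ℝ≥0∞) ≤
      ENNReal.ofReal
          (1 + Real.log ((∑ k ∈ Finset.Ico 1 T, (ω k : ℝ)) / (ω 1 : ℝ))) *
        (Finset.Ico 1 m).sup (fun i =>
          ((∑ k ∈ Finset.Icc 1 (Ts i), ω k : ℝ≥0) : ℝ≥0∞) / ((ω (Ts i) : ℝ≥0) : ℝ≥0∞) *
            P.rootSlend (visit (Ts i)) (visit (Ts (i + 1)))) :=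
  stmt12_general t P ω hω visit Q hrun T hQT m hm Ts hTs1 hTsm hmono hfirst hchain
end
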